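/- arXiv:1304.7590 — 2 statements merged into one kernel-verified Lean document; each statement's English description precedes it below -/
import Mathlib

section
/- Let AS be any set of timed traces over A = I ⊎ O. The family F of all extension-closed supersets TT of AS with respect to which no timed trace is auto-⊥ or semi-⊥ contains the set of all timed traces and is closed under arbitrary nonempty intersections. Consequently, the intersection of all members of F itself belongs to F, i.e. there exists a least extension-closed superset AS^N of AS with respect to which no timed trace is auto-⊥ or semi-⊥ (the normalisation, or ⊥-backpropagation, of AS is well defined). -/
open Classical

/-- A timed event: either an action or a (delay given by a) real number. -/
abbrev TEvent (α : Type*) := α ⊕ ℝ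

/-- `tt` is a timed trace over alphabet `A`: every element is an action in `A`
or a positive real delay, and no two reals are adjacent. -/
def IsTrace {α : Type*} (A : Set α) (tt : List (TEvent α)) : Prop :=
  (∀ x ∈ tt, Sum.elim (· ∈ A) (fun d => 0 < d) x) ∧
  tt.Chain' (fun x y => x.isLeft = true ∨ y.isLeft = true)

/-- Concatenation of timed traces, coalescing adjacent reals by summing them. -/
def tcat {α : Type*} : List (TEvent α) → List (TEvent α) → List (TEvent α)
  | [], ys => ys
  | [Sum.inr d], Sum.inr d' :: ys => Sum.inr (d + d') :: ys
  | x :: xs, ys => x :: tcat xs ys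

/-- Duration of a timed trace: the sum of all its reals. -/
def dur {α : Type*} (tt : List (TEvent α)) : ℝ :=
  (tt.map (Sum.elim (fun _ => (0 : ℝ)) id)).sum

/-- Action count of a timed trace. -/
def acount {α : Type*} (tt : List (TEvent α)) : ℕ :=
  (tt.filter Sum.isLeft).length

/-- Projection of a timed trace onto a sub-alphabet `A₀`: remove actions not in
`A₀` and coalesce reals that thereby become adjacent. -/
noncomputable def proj {α : Type*} (A₀ : Set α) : List (TEvent α) → List (TEvent α)
  | [] => []
  | Sum.inl a :: xs => if a ∈ A₀ then Sum.inl a :: proj A₀ xs else proj A₀ xs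
  | Sum.inr d :: xs => tcat [Sum.inr d] (proj A₀ xs)

/-- `tt⌢⟨d⟩` for `d ≥ 0`, where `tt⌢⟨0⟩` denotes `tt` itself. -/
noncomputable def dext {α : Type*} (tt : List (TEvent α)) (d : ℝ) : List (TEvent α) :=
  if d = 0 then tt else tcat tt [Sum.inr d]

/-- `TT` is extension-closed (over alphabet `A`). -/
def ExtClosed {α : Type*} (A : Set α) (TT : Set (List (TEvent α))) : Prop :=
  ∀ tt ∈ TT, (∀ a ∈ A, tcat tt [Sum.inl a] ∈ TT) ∧
    (∀ d : ℝ, 0 < d → tcat tt [Sum.inr d] ∈ TT)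

/-- `tt` is auto-⊥ (resp. auto-⊤) w.r.t. `TT` when `X` is the output (resp.
input) alphabet: `tt ∉ TT` but some one-action `X`-extension of `tt` is in `TT`. -/
def AutoErr {α : Type*} (X : Set α) (TT : Set (List (TEvent α)))
    (tt : List (TEvent α)) : Prop :=
  tt ∉ TT ∧ ∃ e ∈ X, tcat tt [Sum.inl e] ∈ TT

/-- `tt` is semi-⊥ (resp. semi-⊤) w.r.t. `TT` when `Y` is the input (resp.
output) alphabet. -/
def SemiErr {α : Type*} (Y : Set α) (TT : Set (List (TEvent α)))
    (tt : List (TEvent α)) : Prop :=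
  tt ∉ TT ∧ ∃ d : ℝ, 0 < d ∧ dext tt d ∈ TT ∧
    ∀ d₀ : ℝ, 0 ≤ d₀ → d₀ < d → ∀ e ∈ Y, tcat (dext tt d₀) [Sum.inl e] ∈ TT

/-- The family of extension-closed supersets of `S` (consisting of timed traces
over `A`) with respect to which no timed trace is `AutoErr X` or `SemiErr Y`. -/
def ErrFreeFamily {α : Type*} (A X Y : Set α) (S : Set (List (TEvent α))) :
    Set (Set (List (TEvent α))) :=
  {TT | S ⊆ TT ∧ TT ⊆ {tt | IsTrace A tt} ∧ ExtClosed A TT ∧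
    ∀ tt, IsTrace A tt → ¬ AutoErr X TT tt ∧ ¬ SemiErr Y TT tt}

/-- The least extension-closed superset of `S` with respect to which no timed
trace is `AutoErr X` or `SemiErr Y`.  With `X := O`, `Y := I` this is the
normalisation (⊥-backpropagation) `S^N`; with `X := I`, `Y := O` it is the
realisation (⊤-backpropagation) `S^R`. -/
def backprop {α : Type*} (A X Y : Set α) (S : Set (List (TEvent α))) :
    Set (List (TEvent α)) :=
  ⋂₀ ErrFreeFamily A X Y S

/-- `TT` is `X`-receptive (I-receptive for `X := I`, O-receptive for `X := O`). -/
def Receptive {α : Type*} (X : Set α) (TT : Set (List (TEvent α))) : Prop :=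
  ∀ tt ∈ TT,
    (∀ e ∈ X, tcat tt [Sum.inl e] ∈ TT) ∧
    (∀ d : ℝ, 0 < d → tcat tt [Sum.inr d] ∉ TT →
      ∃ w, w ≠ [] ∧ IsTrace X w ∧ (∃ a, w.getLast? = some (Sum.inl a)) ∧
        tcat tt w ∈ TT ∧ dur w < d)

/-!
The conditions defining the family are all preserved by intersections: a trace that is auto-⊥
or semi-⊥ for `⋂₀ G` lies outside some member `TT` of `G`, while every extension witnessing the
error lies in all members, so the trace is already auto-⊥ or semi-⊥ for `TT`. The set of all
timed traces is extension-closed because `tcat` of two timed traces is a timed trace, and it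
has no such error traces since they must lie outside it.
-/

section Traces

variable {α : Type*} {A : Set α}

theorem isTrace_cons {x : TEvent α} {xs : List (TEvent α)} :
    IsTrace A (x :: xs) ↔ Sum.elim (· ∈ A) (fun d => 0 < d) x ∧ IsTrace A xs ∧
      ∀ y ∈ xs.head?, x.isLeft = true ∨ y.isLeft = true := by
  constructor
  · rintro ⟨hmem, hchain⟩
    obtain ⟨hhead, htail⟩ := List.isChain_cons.1 hchain
    exact ⟨hmem x List.mem_cons_self,
      ⟨fun y hy => hmem y (List.mem_cons_of_mem x hy), htail⟩, hhead⟩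
  · rintro ⟨hx, ⟨hmem, hchain⟩, hhead⟩
    exact ⟨List.forall_mem_cons.2 ⟨hx, hmem⟩, List.isChain_cons.2 ⟨hhead, hchain⟩⟩

theorem isTrace_singleton {x : TEvent α} (hx : Sum.elim (· ∈ A) (fun d => 0 < d) x) :
    IsTrace A [x] :=
  ⟨by simpa using hx, List.isChain_singleton x⟩

theorem head?_map_isLeft_tcat {xs : List (TEvent α)} (ys : List (TEvent α)) (h : xs ≠ []) :
    (tcat xs ys).head?.map Sum.isLeft = xs.head?.map Sum.isLeft := by
  match xs, ys with
  | [Sum.inr _], Sum.inr _ :: _ => simp [tcat]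
  | [Sum.inr _], [] => simp [tcat]
  | [Sum.inr _], Sum.inl _ :: _ => simp [tcat]
  | Sum.inl _ :: _, _ => simp [tcat]
  | Sum.inr _ :: _ :: _, _ => simp [tcat]

theorem isTrace_tcat : ∀ {xs ys : List (TEvent α)},
    IsTrace A xs → IsTrace A ys → IsTrace A (tcat xs ys)
  | [], _, _, hys => hys
  | [Sum.inr d], Sum.inr d' :: ys, hxs, hys => by
    obtain ⟨hd, -, -⟩ := isTrace_cons.1 hxs
    obtain ⟨hd', hys, hhead⟩ := isTrace_cons.1 hys
    refine isTrace_cons.2 ⟨add_pos hd hd', hys, fun y hy => ?_⟩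
    simpa using hhead y hy
  | [Sum.inl _], _, hxs, hys => by
    obtain ⟨ha, -, -⟩ := isTrace_cons.1 hxs
    exact isTrace_cons.2 ⟨ha, hys, by simp⟩
  | [Sum.inr _], [], hxs, _ => hxs
  | [Sum.inr _], Sum.inl _ :: _, hxs, hys => by
    obtain ⟨hd, -, -⟩ := isTrace_cons.1 hxs
    exact isTrace_cons.2 ⟨hd, hys, by simp [tcat]⟩
  | x :: x' :: xs, ys, hxs, hys => by
    obtain ⟨hx, hxs, hhead⟩ := isTrace_cons.1 hxs
    have htail := head?_map_isLeft_tcat ys (List.cons_ne_nil x' xs)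
    have hcat : tcat (x :: x' :: xs) ys = x :: tcat (x' :: xs) ys := by
      cases x <;> rfl
    rw [hcat]
    refine isTrace_cons.2 ⟨hx, isTrace_tcat hxs hys, fun y hy => ?_⟩
    rw [hy] at htail
    simpa [← Option.some_inj.1 htail] using hhead x' rfl

theorem extClosed_setOf_isTrace (A : Set α) : ExtClosed A {tt | IsTrace A tt} :=
  fun _ htt =>
    ⟨fun _ ha => isTrace_tcat htt (isTrace_singleton ha),
     fun _ hd => isTrace_tcat htt (isTrace_singleton hd)⟩

end Traces

section Intersection

variable {α : Type*} {G : Set (Set (List (TEvent α)))} {tt : List (TEvent α)}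

theorem ExtClosed.sInter {A : Set α} (h : ∀ TT ∈ G, ExtClosed A TT) : ExtClosed A (⋂₀ G) :=
  fun tt htt =>
    ⟨fun a ha TT hTT => (h TT hTT tt (htt TT hTT)).1 a ha,
     fun d hd TT hTT => (h TT hTT tt (htt TT hTT)).2 d hd⟩

theorem exists_notMem_of_notMem_sInter (h : tt ∉ ⋂₀ G) : ∃ TT ∈ G, tt ∉ TT := by
  simpa only [Set.mem_sInter, not_forall, exists_prop] using h

theorem AutoErr.exists_of_sInter {X : Set α} (h : AutoErr X (⋂₀ G) tt) :
    ∃ TT ∈ G, AutoErr X TT tt := by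
  obtain ⟨hnot, e, he, hmem⟩ := h
  obtain ⟨TT, hTT, hnTT⟩ := exists_notMem_of_notMem_sInter hnot
  exact ⟨TT, hTT, hnTT, e, he, hmem TT hTT⟩

theorem SemiErr.exists_of_sInter {Y : Set α} (h : SemiErr Y (⋂₀ G) tt) :
    ∃ TT ∈ G, SemiErr Y TT tt := by
  obtain ⟨hnot, d, hd, hdext, hall⟩ := h
  obtain ⟨TT, hTT, hnTT⟩ := exists_notMem_of_notMem_sInter hnot
  exact ⟨TT, hTT, hnTT, d, hd, hdext TT hTT,
    fun d₀ h0 hlt e he => hall d₀ h0 hlt e he TT hTT⟩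

end Intersection

section ErrFreeFamily

variable {α : Type*} {A X Y : Set α} {S : Set (List (TEvent α))}

theorem setOf_isTrace_mem_errFreeFamily (hS : S ⊆ {tt | IsTrace A tt}) :
    {tt | IsTrace A tt} ∈ ErrFreeFamily A X Y S :=
  ⟨hS, subset_rfl, extClosed_setOf_isTrace A,
    fun _ htt => ⟨fun h => h.1 htt, fun h => h.1 htt⟩⟩

theorem sInter_mem_errFreeFamily {G : Set (Set (List (TEvent α)))}
    (hG : G ⊆ ErrFreeFamily A X Y S) (hne : G.Nonempty) : ⋂₀ G ∈ ErrFreeFamily A X Y S := by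
  obtain ⟨TT₀, hTT₀⟩ := hne
  refine ⟨Set.subset_sInter fun TT hTT => (hG hTT).1,
    (Set.sInter_subset_of_mem hTT₀).trans (hG hTT₀).2.1,
    ExtClosed.sInter fun TT hTT => (hG hTT).2.2.1, fun tt htt => ⟨fun h => ?_, fun h => ?_⟩⟩
  · obtain ⟨TT, hTT, hauto⟩ := h.exists_of_sInter
    exact ((hG hTT).2.2.2 tt htt).1 hauto
  · obtain ⟨TT, hTT, hsemi⟩ := h.exists_of_sInter
    exact ((hG hTT).2.2.2 tt htt).2 hsemi

end ErrFreeFamily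

theorem normalisation_well_defined_general {α : Type*} (I O : Set α)
    (AS : Set (List (TEvent α)))
    (hAS : AS ⊆ {tt | IsTrace (I ∪ O) tt}) :
    {tt | IsTrace (I ∪ O) tt} ∈ ErrFreeFamily (I ∪ O) O I AS ∧
    (∀ G ⊆ ErrFreeFamily (I ∪ O) O I AS, G.Nonempty →
      ⋂₀ G ∈ ErrFreeFamily (I ∪ O) O I AS) ∧
    backprop (I ∪ O) O I AS ∈ ErrFreeFamily (I ∪ O) O I AS :=
  have huniv := setOf_isTrace_mem_errFreeFamily hAS
  ⟨huniv, fun _ hG hne => sInter_mem_errFreeFamily hG hne,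
    sInter_mem_errFreeFamily subset_rfl ⟨_, huniv⟩⟩

/-- The family of extension-closed supersets of `AS` free of auto-⊥ and semi-⊥
traces contains the set of all timed traces, is closed under nonempty
intersections, and hence has a least element `AS^N` (normalisation is well
defined). -/
theorem normalisation_well_defined {α : Type*} (I O : Set α)
    (hIO : Disjoint I O) (AS : Set (List (TEvent α)))
    (hAS : AS ⊆ {tt | IsTrace (I ∪ O) tt}) :
    {tt | IsTrace (I ∪ O) tt} ∈ ErrFreeFamily (I ∪ O) O I AS ∧
    (∀ G ⊆ ErrFreeFamily (I ∪ O) O I AS, G.Nonempty →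
      ⋂₀ G ∈ ErrFreeFamily (I ∪ O) O I AS) ∧
    backprop (I ∪ O) O I AS ∈ ErrFreeFamily (I ∪ O) O I AS :=
  normalisation_well_defined_general I O AS hAS
end

section
/- Alphabet enlargement preserves receptivity of complements: let GR be an extension-closed set of timed traces over A = I ⊎ O whose complement is I-receptive, and let Δ be a set of fresh actions disjoint from A, regarded as inputs of the enlarged alphabet A ∪ Δ = (I ∪ Δ) ⊎ O. Then GR^Δ is extension-closed over A ∪ Δ and its complement (in the set of all timed traces over A ∪ Δ) is (I ∪ Δ)-receptive. -/
open Classical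

/-- Alphabet enlargement: `TT^Δ` consists of the timed traces over `A ∪ Δ` of
the form `tt₀⌢tt₁` where `tt₀↾A ∈ TT`. -/
noncomputable def enlarge {α : Type*} (A Δ : Set α) (TT : Set (List (TEvent α))) :
    Set (List (TEvent α)) :=
  {tt | ∃ tt₀ tt₁, IsTrace (A ∪ Δ) tt₀ ∧ IsTrace (A ∪ Δ) tt₁ ∧
    proj A tt₀ ∈ TT ∧ tt = tcat tt₀ tt₁}

/-!
Because `GR` is extension-closed, membership in `GR^Δ` depends only on the projection:
`tt ∈ GR^Δ` iff `tt` is a trace over `A ∪ Δ` and `tt↾A ∈ GR`, since projection maps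
concatenation to concatenation. Appending a fresh input `δ ∈ Δ` leaves the projection unchanged,
while appending an input of `I`, a delay, or any trace `w` over `I` appends the same thing to the
projection. So every receptivity requirement for the complement of `GR^Δ` at `tt` reduces to one
for the complement of `GR` at `tt↾A`, and the witness `w` found there works unchanged.
Extension-closure of `GR^Δ` is just associativity of concatenation.
-/

section
variable {α : Type*}

@[simp] lemma tcat_nil_left (ys : List (TEvent α)) : tcat [] ys = ys := rfl

@[simp] lemma tcat_cons_cons (x y : TEvent α) (xs ys : List (TEvent α)) :
    tcat (x :: y :: xs) ys = x :: tcat (y :: xs) ys := by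
  cases x <;> cases ys <;> rfl

@[simp] lemma tcat_inl_cons (a : α) (xs ys : List (TEvent α)) :
    tcat (Sum.inl a :: xs) ys = Sum.inl a :: tcat xs ys := by
  cases xs <;> cases ys <;> rfl

@[simp] lemma tcat_inr_inr (d d' : ℝ) (ys : List (TEvent α)) :
    tcat [Sum.inr d] (Sum.inr d' :: ys) = Sum.inr (d + d') :: ys := rfl

@[simp] lemma tcat_inr_inl (d : ℝ) (a : α) (ys : List (TEvent α)) :
    tcat [Sum.inr d] (Sum.inl a :: ys) = Sum.inr d :: Sum.inl a :: ys := rfl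

@[simp] lemma tcat_inr_nil (d : ℝ) : tcat [Sum.inr d] ([] : List (TEvent α)) = [Sum.inr d] := rfl

@[simp] lemma tcat_nil_right (xs : List (TEvent α)) : tcat xs [] = xs := by
  induction xs with
  | nil => rfl
  | cons x xs ih => cases xs <;> cases x <;> simp_all

lemma tcat_cons_eq_cons (x : TEvent α) (xs ys : List (TEvent α)) :
    ∃ z zs, tcat (x :: xs) ys = z :: zs ∧ z.isLeft = x.isLeft := by
  rcases x with a | d
  · exact ⟨_, _, tcat_inl_cons a xs ys, rfl⟩
  · rcases xs with _ | ⟨x', xs⟩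
    · rcases ys with _ | ⟨_ | _, ys⟩ <;> simp
    · exact ⟨_, _, tcat_cons_cons _ x' xs ys, rfl⟩

lemma tcat_assoc (x y z : List (TEvent α)) :
    tcat (tcat x y) z = tcat x (tcat y z) := by
  fun_induction tcat x y with
  | case1 => rfl
  | case2 d d' ys =>
    rcases ys with _ | ⟨_ | _, ys⟩ <;> rcases z with _ | ⟨_ | _, z⟩ <;> simp [add_assoc]
  | case3 x xs y hx ih =>
    rcases xs with _ | ⟨x', xs⟩
    · rcases x with a | d
      · simp
      · rcases y with _ | ⟨_ | d', y⟩ <;> simp_all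
    · obtain ⟨w, ws, hw, -⟩ := tcat_cons_eq_cons x' xs y
      rw [hw] at ih
      simp [hw, ← ih]

@[simp] lemma isTrace_nil (A : Set α) : IsTrace A ([] : List (TEvent α)) :=
  ⟨by simp, List.isChain_nil⟩

@[simp] lemma isTrace_singleton_s15 {A : Set α} {x : TEvent α} :
    IsTrace A [x] ↔ Sum.elim (· ∈ A) (0 < ·) x :=
  ⟨fun h => h.1 x (by simp), fun h => ⟨by simpa using h, List.isChain_singleton _⟩⟩

@[simp] lemma isTrace_cons_cons {A : Set α} {x y : TEvent α} {xs : List (TEvent α)} :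
    IsTrace A (x :: y :: xs) ↔
      Sum.elim (· ∈ A) (0 < ·) x ∧ (x.isLeft ∨ y.isLeft) ∧ IsTrace A (y :: xs) := by
  show (_ ∧ List.IsChain _ _) ↔ _ ∧ _ ∧ (_ ∧ List.IsChain _ _)
  rw [List.forall_mem_cons, List.isChain_cons_cons]
  tauto

lemma IsTrace.of_cons {A : Set α} {x : TEvent α} {xs : List (TEvent α)}
    (h : IsTrace A (x :: xs)) : IsTrace A xs := by
  rcases xs with _ | ⟨y, xs⟩
  · exact isTrace_nil A
  · exact (isTrace_cons_cons.1 h).2.2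

lemma isTrace_inl {A : Set α} {a : α} (ha : a ∈ A) : IsTrace A [Sum.inl a] :=
  isTrace_singleton_s15.2 ha

lemma isTrace_inr (A : Set α) {d : ℝ} (hd : 0 < d) : IsTrace A [Sum.inr d] :=
  isTrace_singleton_s15.2 hd

lemma IsTrace.mono {A B : Set α} (h : A ⊆ B) {tt : List (TEvent α)}
    (ht : IsTrace A tt) : IsTrace B tt :=
  ⟨fun x hx => by rcases x with a | d; exacts [h (ht.1 _ hx), ht.1 _ hx], ht.2⟩

lemma IsTrace.tcat {A : Set α} {xs ys : List (TEvent α)}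
    (hxs : IsTrace A xs) (hys : IsTrace A ys) : IsTrace A (_root_.tcat xs ys) := by
  fun_induction _root_.tcat xs ys with
  | case1 => exact hys
  | case2 d d' ys =>
    rcases ys with _ | ⟨_ | _, ys⟩ <;> simp_all [add_pos]
  | case3 x xs ys hx ih =>
    rcases xs with _ | ⟨x', xs⟩
    · rcases ys with _ | ⟨y, ys⟩
      · exact hxs
      · rcases x with a | d <;> rcases y with b | d' <;> simp_all
    · obtain ⟨z, zs, hz, hzx⟩ := tcat_cons_eq_cons x' xs ys
      simp only [isTrace_cons_cons] at hxs
      simp only [hz, isTrace_cons_cons, hzx] at ih ⊢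
      exact ⟨hxs.1, hxs.2.1, ih hxs.2.2 hys⟩

lemma tcat_singleton_of_isTrace {A : Set α} {x : TEvent α} {xs : List (TEvent α)}
    (h : IsTrace A (x :: xs)) : tcat [x] xs = x :: xs := by
  rcases x with a | d <;> rcases xs with _ | ⟨b | d', xs⟩ <;> simp_all

lemma ExtClosed.tcat_mem {A : Set α} {TT : Set (List (TEvent α))} (hext : ExtClosed A TT)
    {s w : List (TEvent α)} (hs : s ∈ TT) (hw : IsTrace A w) : tcat s w ∈ TT := by
  induction w generalizing s with
  | nil => simpa using hs
  | cons x w ih =>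
    rw [← tcat_singleton_of_isTrace hw, ← tcat_assoc]
    refine ih ?_ hw.of_cons
    have hx := hw.1 x List.mem_cons_self
    rcases x with a | d
    exacts [(hext s hs).1 a hx, (hext s hs).2 d hx]

lemma proj_tcat (A₀ : Set α) (xs ys : List (TEvent α)) :
    proj A₀ (tcat xs ys) = tcat (proj A₀ xs) (proj A₀ ys) := by
  fun_induction tcat xs ys with
  | case1 => rfl
  | case2 d d' ys => simp [proj, ← tcat_assoc]
  | case3 x xs ys hx ih =>
    rcases x with a | d
    · by_cases ha : a ∈ A₀ <;> simp [proj, ha, ih]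
    · simp [proj, ih, tcat_assoc]

lemma IsTrace.proj {B : Set α} (A₀ : Set α) {tt : List (TEvent α)}
    (h : IsTrace B tt) : IsTrace A₀ (proj A₀ tt) := by
  induction tt with
  | nil => exact isTrace_nil A₀
  | cons x xs ih =>
    rcases x with a | d
    · by_cases ha : a ∈ A₀
      · simpa [_root_.proj, ha] using (isTrace_inl ha).tcat (ih h.of_cons)
      · simpa [_root_.proj, ha] using ih h.of_cons
    · exact (isTrace_inr A₀ (h.1 _ List.mem_cons_self)).tcat (ih h.of_cons)

lemma proj_eq_self {A₀ : Set α} {w : List (TEvent α)} (hw : IsTrace A₀ w) :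
    proj A₀ w = w := by
  induction w with
  | nil => rfl
  | cons x xs ih =>
    rcases x with a | d
    · simp [proj, show a ∈ A₀ from hw.1 _ List.mem_cons_self, ih hw.of_cons]
    · rw [proj, ih hw.of_cons, tcat_singleton_of_isTrace hw]

lemma proj_tcat_of_isTrace {A₀ : Set α} (tt : List (TEvent α)) {w : List (TEvent α)}
    (hw : IsTrace A₀ w) : proj A₀ (tcat tt w) = tcat (proj A₀ tt) w := by
  rw [proj_tcat, proj_eq_self hw]

lemma proj_tcat_inl_of_notMem {A₀ : Set α} (tt : List (TEvent α)) {a : α} (ha : a ∉ A₀) :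
    proj A₀ (tcat tt [Sum.inl a]) = proj A₀ tt := by
  simp [proj_tcat, proj, ha]

lemma extClosed_enlarge (A Δ : Set α) (TT : Set (List (TEvent α))) :
    ExtClosed (A ∪ Δ) (enlarge A Δ TT) := by
  have key : ∀ tt ∈ enlarge A Δ TT, ∀ x, IsTrace (A ∪ Δ) [x] →
      tcat tt [x] ∈ enlarge A Δ TT := by
    rintro _ ⟨tt₀, tt₁, h₀, h₁, hm, rfl⟩ x hx
    exact ⟨tt₀, tcat tt₁ [x], h₀, h₁.tcat hx, hm, tcat_assoc _ _ _⟩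
  exact fun tt htt => ⟨fun a ha => key tt htt _ (isTrace_inl ha),
    fun d hd => key tt htt _ (isTrace_inr _ hd)⟩

lemma mem_enlarge_iff {A Δ : Set α} {TT : Set (List (TEvent α))} (hext : ExtClosed A TT)
    {tt : List (TEvent α)} :
    tt ∈ enlarge A Δ TT ↔ IsTrace (A ∪ Δ) tt ∧ proj A tt ∈ TT := by
  constructor
  · rintro ⟨tt₀, tt₁, h₀, h₁, hm, rfl⟩
    exact ⟨h₀.tcat h₁, proj_tcat A tt₀ tt₁ ▸ hext.tcat_mem hm (h₁.proj A)⟩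
  · exact fun ⟨htr, hm⟩ => ⟨tt, [], htr, isTrace_nil _, hm, (tcat_nil_right tt).symm⟩

lemma mem_compl_enlarge_iff {A Δ : Set α} {TT : Set (List (TEvent α))} (hext : ExtClosed A TT)
    {tt : List (TEvent α)} :
    tt ∈ {tt | IsTrace (A ∪ Δ) tt} \ enlarge A Δ TT ↔
      IsTrace (A ∪ Δ) tt ∧ proj A tt ∈ {tt | IsTrace A tt} \ TT := by
  simp only [Set.mem_sdiff, Set.mem_ofPred_eq, mem_enlarge_iff hext]
  exact ⟨fun ⟨h, hn⟩ => ⟨h, h.proj A, fun hm => hn ⟨h, hm⟩⟩,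
    fun ⟨h, _, hn⟩ => ⟨h, fun hm => hn hm.2⟩⟩

lemma Receptive.compl_enlarge {I A Δ : Set α} {GR : Set (List (TEvent α))}
    (hIA : I ⊆ A) (hΔ : Disjoint A Δ) (hext : ExtClosed A GR)
    (hrec : Receptive I ({tt | IsTrace A tt} \ GR)) :
    Receptive (I ∪ Δ) ({tt | IsTrace (A ∪ Δ) tt} \ enlarge A Δ GR) := by
  intro tt htt
  obtain ⟨htr, hc⟩ := (mem_compl_enlarge_iff hext).1 htt
  refine ⟨fun e he => ?_, fun d hd hnot => ?_⟩
  · have he' : e ∈ A ∪ Δ := Set.union_subset_union_left Δ hIA he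
    refine (mem_compl_enlarge_iff hext).2 ⟨htr.tcat (isTrace_inl he'), ?_⟩
    rcases he with heI | heΔ
    · rw [proj_tcat_of_isTrace tt (isTrace_inl (hIA heI))]
      exact (hrec _ hc).1 e heI
    · rwa [proj_tcat_inl_of_notMem tt (Set.disjoint_right.1 hΔ heΔ)]
  · have hnot' : tcat (proj A tt) [Sum.inr d] ∉ {tt | IsTrace A tt} \ GR := fun h =>
      hnot <| (mem_compl_enlarge_iff hext).2
        ⟨htr.tcat (isTrace_inr _ hd), proj_tcat_of_isTrace tt (isTrace_inr A hd) ▸ h⟩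
    obtain ⟨w, hw0, hwI, hwlast, hwc, hwdur⟩ := (hrec _ hc).2 d hd hnot'
    refine ⟨w, hw0, hwI.mono Set.subset_union_left, hwlast, ?_, hwdur⟩
    refine (mem_compl_enlarge_iff hext).2 ⟨htr.tcat (hwI.mono (hIA.trans Set.subset_union_left)), ?_⟩
    rwa [proj_tcat_of_isTrace tt (hwI.mono hIA)]

end

theorem enlarge_compl_receptive_general {α : Type*} (I O Δ : Set α)
    (hΔ : Disjoint (I ∪ O) Δ)
    (GR : Set (List (TEvent α)))
    (hext : ExtClosed (I ∪ O) GR)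
    (hrec : Receptive I ({tt | IsTrace (I ∪ O) tt} \ GR)) :
    ExtClosed ((I ∪ O) ∪ Δ) (enlarge (I ∪ O) Δ GR) ∧
      Receptive (I ∪ Δ)
        ({tt | IsTrace ((I ∪ O) ∪ Δ) tt} \ enlarge (I ∪ O) Δ GR) :=
  ⟨extClosed_enlarge _ _ _, hrec.compl_enlarge Set.subset_union_left hΔ hext⟩

/-- Alphabet enlargement preserves receptivity of complements: if the
complement of the extension-closed set `GR` is I-receptive, and the fresh
actions `Δ` are regarded as inputs of the enlarged alphabet `(I ∪ Δ) ⊎ O`,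
then `GR^Δ` is extension-closed over `(I ∪ O) ∪ Δ` and its complement is
`(I ∪ Δ)`-receptive. -/
theorem enlarge_compl_receptive {α : Type*} (I O Δ : Set α)
    (hIO : Disjoint I O) (hΔ : Disjoint (I ∪ O) Δ)
    (GR : Set (List (TEvent α)))
    (hGR : GR ⊆ {tt | IsTrace (I ∪ O) tt})
    (hext : ExtClosed (I ∪ O) GR)
    (hrec : Receptive I ({tt | IsTrace (I ∪ O) tt} \ GR)) :
    ExtClosed ((I ∪ O) ∪ Δ) (enlarge (I ∪ O) Δ GR) ∧
      Receptive (I ∪ Δ)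
        ({tt | IsTrace ((I ∪ O) ∪ Δ) tt} \ enlarge (I ∪ O) Δ GR) :=
  enlarge_compl_receptive_general I O Δ hΔ GR hext hrec
end
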